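/- Let X ⊆ ℝ^k and let f : X → ℝ^d be a (K,M)-quasi-isometric embedding for some K ≥ 1 and M ≥ 0. For every α ≥ 0 there exists a constant c ≥ 1, depending only on α and f, such that for all subsets A ⊆ X, one has M^α(A) ≤ c·M^α(f(A)) and M^α(f(A)) ≤ c·M^α(A). In particular, A is α-mass regular if and only if f(A) is α-mass regular, and mdim(A) = mdim(f(A)). -/

import Mathlib

open Set MeasureTheory Filter
open scoped ENNReal NNReal

noncomputable section

variable {ι : Type*} [Fintype ι]

/-- A (half-open) cube in `ℝ^ι` based at `a` with side length `s`. -/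
def cube (a : EuclideanSpace ℝ ι) (s : ℝ) : Set (EuclideanSpace ℝ ι) :=
  {x | ∀ i, a i ≤ x i ∧ x i < a i + s}

/-- Coordinatewise floor map. -/
def floorPt (x : EuclideanSpace ℝ ι) : EuclideanSpace ℝ ι := WithLp.toLp 2 (fun i => (⌊x i⌋ : ℝ))

/-- `⌊A⌋`, the image of `A` under the coordinatewise floor map. -/
def floorSet (A : Set (EuclideanSpace ℝ ι)) : Set (EuclideanSpace ℝ ι) := floorPt '' A

/-- The α-counting measure of `A`. -/
def countMeas (α : ℝ) (A : Set (EuclideanSpace ℝ ι)) : ℝ≥0∞ :=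
  ⨅ ℓ : ℝ, ⨆ (a : EuclideanSpace ℝ ι) (s : ℝ) (_ : ℓ ≤ s ∧ 0 < s),
    ((floorSet A ∩ cube a s).encard : ℝ≥0∞) / ENNReal.ofReal (s ^ α)

/-- The counting dimension of `A`. -/
def cdim (A : Set (EuclideanSpace ℝ ι)) : ℝ :=
  sInf {α : ℝ | 0 ≤ α ∧ countMeas α A = 0}

/-- The centered cube `[-ℓ, ℓ)^ι`. -/
def centeredCube (ℓ : ℝ) : Set (EuclideanSpace ℝ ι) :=
  cube (WithLp.toLp 2 (fun _ => -ℓ) : EuclideanSpace ℝ ι) (2 * ℓ)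

/-- The α-mass measure of `A`. -/
def massMeas (α : ℝ) (A : Set (EuclideanSpace ℝ ι)) : ℝ≥0∞ :=
  ⨅ L : ℝ, ⨆ (ℓ : ℝ) (_ : L ≤ ℓ ∧ 0 < ℓ),
    ((floorSet A ∩ centeredCube ℓ).encard : ℝ≥0∞) / ENNReal.ofReal ((2 * ℓ) ^ α)

/-- The (upper) mass dimension of `A`. -/
def mdim (A : Set (EuclideanSpace ℝ ι)) : ℝ :=
  sInf {α : ℝ | 0 ≤ α ∧ massMeas α A = 0}


/-- `f` is a `(K,M)`-quasi-isometric embedding of `X` (with the Euclidean metrics). -/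
def QIEOn {ι κ : Type*} [Fintype ι] [Fintype κ] (K M : ℝ) (X : Set (EuclideanSpace ℝ ι))
    (f : EuclideanSpace ℝ ι → EuclideanSpace ℝ κ) : Prop :=
  ∀ x₁ ∈ X, ∀ x₂ ∈ X,
    (1 / K) * dist x₁ x₂ - M ≤ dist (f x₁) (f x₂) ∧ dist (f x₁) (f x₂) ≤ K * dist x₁ x₂ + M

/-!
A quasi-isometric embedding `φ` of `S` has linear growth and is coarsely injective. Sending the
lattice cell `⌊y⌋` of a point `y ∈ S` to the cell `⌊φ y⌋` therefore maps the cells meeting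
`[-ℓ, ℓ)^k` into a cube of side `C ℓ`, and each fibre of this assignment comes from a subset of
`S` of bounded diameter, hence consists of boundedly many cells. The lattice counts thus compare
up to a constant factor and a dilation of the cube, which changes `M^α` by a factor `N C^α`.
Applied to `f` on `A` and to a quasi-inverse of `f` on `f(A)`, this gives both inequalities; the
statements about regularity and dimension follow because the constants are finite.
-/

lemma Set.encard_biUnion_le_mul {α β : Type*} {T : Set β} {G : β → Set α} {N : ℕ∞}
    (h : ∀ b ∈ T, (G b).encard ≤ N) : (⋃ b ∈ T, G b).encard ≤ N * T.encard := by
  rcases T.finite_or_infinite with hT | hT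
  · lift T to Finset β using hT
    calc (⋃ b ∈ (T : Set β), G b).encard ≤ ∑ b ∈ T, (G b).encard := by
          simpa using T.set_encard_biUnion_le G
      _ ≤ T.card • N := Finset.sum_le_card_nsmul _ _ _ h
      _ = N * (T : Set β).encard := by simp [mul_comm]
  · rcases eq_or_ne N 0 with rfl | hN
    · simp_all
    · simp [hT.encard_eq, ENat.mul_top hN]

lemma EuclideanSpace.abs_apply_sub_le_dist (x y : EuclideanSpace ℝ ι) (i : ι) : |x i - y i| ≤ dist x y := by
  simpa [Real.dist_eq] using PiLp.dist_apply_le x y i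

lemma EuclideanSpace.norm_le_sqrt_card_mul {x : EuclideanSpace ℝ ι} {B : ℝ} (hB : 0 ≤ B)
    (h : ∀ i, |x i| ≤ B) : ‖x‖ ≤ √(Fintype.card ι) * B := by
  rw [EuclideanSpace.norm_eq, ← Real.sqrt_sq hB, ← Real.sqrt_mul (Nat.cast_nonneg _)]
  refine Real.sqrt_le_sqrt ?_
  calc ∑ i, ‖x i‖ ^ 2 ≤ ∑ _i : ι, B ^ 2 := by
        gcongr with i
        simpa using h i
    _ = _ := by simp

lemma dist_le_of_floorPt_eq {x y : EuclideanSpace ℝ ι} (h : floorPt x = floorPt y) :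
    dist x y ≤ √(Fintype.card ι) := by
  rw [dist_eq_norm, ← mul_one √_]
  refine EuclideanSpace.norm_le_sqrt_card_mul zero_le_one fun i => ?_
  have hi : (⌊x i⌋ : ℝ) = ⌊y i⌋ := congrArg (· i) h
  have := Int.floor_le (x i); have := Int.lt_floor_add_one (x i)
  have := Int.floor_le (y i); have := Int.lt_floor_add_one (y i)
  rw [PiLp.sub_apply, abs_le]
  constructor <;> linarith

lemma floorPt_mem_centeredCube {x : EuclideanSpace ℝ ι} {ℓ : ℝ} (h : ‖x‖ + 1 ≤ ℓ) :
    floorPt x ∈ centeredCube ℓ := by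
  intro i
  have hx := abs_le.1 ((Real.norm_eq_abs _).symm.trans_le (PiLp.norm_apply_le x i))
  have := Int.floor_le (x i); have := Int.lt_floor_add_one (x i)
  simp only [floorPt, PiLp.toLp_apply]
  constructor <;> linarith

lemma norm_le_of_floorPt_mem_centeredCube {y : EuclideanSpace ℝ ι} {ℓ : ℝ} (hℓ : 0 ≤ ℓ)
    (h : floorPt y ∈ centeredCube ℓ) : ‖y‖ ≤ √(Fintype.card ι) * (ℓ + 1) := by
  refine EuclideanSpace.norm_le_sqrt_card_mul (by linarith) fun i => ?_
  have hi := h i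
  simp only [floorPt, PiLp.toLp_apply] at hi
  have := Int.floor_le (y i); have := Int.lt_floor_add_one (y i)
  rw [abs_le]
  constructor <;> linarith

lemma exists_encard_floorSet_le (R : ℝ) : ∃ N : ℕ, ∀ F : Set (EuclideanSpace ℝ ι),
    (∀ y ∈ F, ∀ y' ∈ F, dist y y' ≤ R) → (floorSet F).encard ≤ N := by
  classical
  refine ⟨(⌈2 * R⌉ + 1).toNat ^ Fintype.card ι, fun F hF => ?_⟩
  rcases F.eq_empty_or_nonempty with rfl | ⟨y₀, hy₀⟩
  · simp [floorSet]
  set lo : ι → ℤ := fun i => ⌊y₀ i - R⌋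
  set hi : ι → ℤ := fun i => ⌊y₀ i + R⌋
  have hsub : floorSet F ⊆
      (fun z : ι → ℤ => WithLp.toLp 2 fun i => (z i : ℝ)) '' ↑(Finset.Icc lo hi) := by
    rintro _ ⟨y, hy, rfl⟩
    refine ⟨fun i => ⌊y i⌋, ?_, rfl⟩
    have hyi i := abs_le.1 ((EuclideanSpace.abs_apply_sub_le_dist y y₀ i).trans (hF y hy y₀ hy₀))
    simp only [Finset.coe_Icc, mem_Icc, Pi.le_def]
    exact ⟨fun i => Int.floor_mono (by linarith [hyi i]),
      fun i => Int.floor_mono (by linarith [hyi i])⟩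
  have hcard i : (Finset.Icc (lo i) (hi i)).card ≤ (⌈2 * R⌉ + 1).toNat := by
    have h₁ := Int.floor_le (y₀ i + R)
    have h₂ := Int.lt_floor_add_one (y₀ i - R)
    have : hi i - lo i - 1 < ⌈2 * R⌉ := Int.lt_ceil.2 (by push_cast; linarith)
    rw [Int.card_Icc]
    omega
  calc (floorSet F).encard ≤ (Finset.Icc lo hi : Set (ι → ℤ)).encard :=
        (encard_mono hsub).trans (encard_image_le _ _)
    _ ≤ _ := by
      rw [encard_coe_eq_coe_finsetCard, Nat.cast_le, Pi.card_Icc]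
      exact (Finset.prod_le_pow_card _ _ _ fun i _ => hcard i).trans_eq (by simp)

section MassMeasure

variable {τ υ : Type*}

lemma massMeas_empty (β : ℝ) : massMeas β (∅ : Set (EuclideanSpace ℝ τ)) = 0 := by
  simp [massMeas, floorSet]

lemma massMeas_mono {β : ℝ} {A B : Set (EuclideanSpace ℝ τ)} (h : A ⊆ B) :
    massMeas β A ≤ massMeas β B := by
  unfold massMeas floorSet
  gcongr

lemma massMeas_le_of_encard_le {A : Set (EuclideanSpace ℝ τ)} {B : Set (EuclideanSpace ℝ υ)}
    {N : ℕ} {C L₀ : ℝ} (hC : 0 < C) (β : ℝ)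
    (h : ∀ ℓ, L₀ ≤ ℓ → (floorSet B ∩ centeredCube ℓ).encard ≤
      N * (floorSet A ∩ centeredCube (C * ℓ)).encard) :
    massMeas β B ≤ ENNReal.ofReal (N * C ^ β) * massMeas β A := by
  have hCβ : 0 < C ^ β := Real.rpow_pos_of_pos hC β
  conv_rhs => rw [massMeas]
  rw [ENNReal.mul_iInf fun h => absurd h ENNReal.ofReal_ne_top]
  refine le_iInf fun L => (iInf_le _ (max L₀ (L / C))).trans (iSup₂_le fun ℓ ⟨hℓ, hℓ0⟩ => ?_)
  have hCℓ : L ≤ C * ℓ := by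
    have := (le_max_right _ _).trans hℓ
    rwa [div_le_iff₀ hC, mul_comm] at this
  have hcount : ((floorSet B ∩ centeredCube ℓ).encard : ℝ≥0∞) ≤
      N * ((floorSet A ∩ centeredCube (C * ℓ)).encard : ℝ≥0∞) := by
    simpa using ENat.toENNReal_le.2 (h ℓ ((le_max_left _ _).trans hℓ))
  have hpow : ENNReal.ofReal ((2 * (C * ℓ)) ^ β) =
      ENNReal.ofReal (C ^ β) * ENNReal.ofReal ((2 * ℓ) ^ β) := by
    rw [← ENNReal.ofReal_mul hCβ.le, mul_left_comm, Real.mul_rpow hC.le (by positivity)]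
  calc ((floorSet B ∩ centeredCube ℓ).encard : ℝ≥0∞) / ENNReal.ofReal ((2 * ℓ) ^ β)
      ≤ N * ((floorSet A ∩ centeredCube (C * ℓ)).encard : ℝ≥0∞) /
          ENNReal.ofReal ((2 * ℓ) ^ β) := by gcongr
    _ = ENNReal.ofReal (N * C ^ β) * (((floorSet A ∩ centeredCube (C * ℓ)).encard : ℝ≥0∞) /
          ENNReal.ofReal ((2 * (C * ℓ)) ^ β)) := by
      rw [hpow, ENNReal.ofReal_mul (Nat.cast_nonneg N), ENNReal.ofReal_natCast, mul_assoc,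
        ← mul_div_assoc, ENNReal.mul_div_mul_left _ _ (by simpa using hCβ) ENNReal.ofReal_ne_top,
        mul_div_assoc]
    _ ≤ _ := by gcongr; exact le_iSup₂_of_le (C * ℓ) ⟨hCℓ, by positivity⟩ le_rfl

end MassMeasure

namespace QIEOn

variable {κ : Type*} [Fintype κ] {K M : ℝ} {X : Set (EuclideanSpace ℝ ι)}
  {f : EuclideanSpace ℝ ι → EuclideanSpace ℝ κ}

lemma mono (hf : QIEOn K M X f) {A : Set (EuclideanSpace ℝ ι)} (hA : A ⊆ X) : QIEOn K M A f :=
  fun x hx y hy => hf x (hA hx) y (hA hy)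

lemma dist_le (hf : QIEOn K M X f) (hK : 0 < K) {x y : EuclideanSpace ℝ ι} (hx : x ∈ X)
    (hy : y ∈ X) : dist x y ≤ K * (dist (f x) (f y) + M) := by
  have := (hf x hx y hy).1
  rw [one_div, inv_mul_eq_div, sub_le_iff_le_add, div_le_iff₀ hK] at this
  linarith

lemma norm_le (hf : QIEOn K M X f) (hK : 0 ≤ K) {p y : EuclideanSpace ℝ ι} (hp : p ∈ X)
    (hy : y ∈ X) : ‖f y‖ ≤ K * ‖y‖ + (‖f p‖ + K * ‖p‖ + M) := by
  have hfy := norm_le_norm_add_norm_sub' (f y) (f p)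
  have hyp := dist_le_norm_add_norm y p
  rw [← dist_eq_norm] at hfy
  nlinarith [(hf y hy p hp).2]

lemma dist_le_of_floorPt_eq (hf : QIEOn K M X f) (hK : 0 < K) {x y : EuclideanSpace ℝ ι}
    (hx : x ∈ X) (hy : y ∈ X) (h : floorPt (f x) = floorPt (f y)) :
    dist x y ≤ K * (√(Fintype.card κ) + M) :=
  (hf.dist_le hK hx hy).trans (by gcongr; exact _root_.dist_le_of_floorPt_eq h)

lemma invFunOn (hf : QIEOn K M X f) (hK : 1 ≤ K) (hM : 0 ≤ M) :
    QIEOn K (K * M) (f '' X) (Function.invFunOn f X) := by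
  rintro _ ⟨x₁, hx₁, rfl⟩ _ ⟨x₂, hx₂, rfl⟩
  set g := Function.invFunOn f X
  have hg₁ : g (f x₁) ∈ X := Function.invFunOn_mem ⟨x₁, hx₁, rfl⟩
  have hg₂ : g (f x₂) ∈ X := Function.invFunOn_mem ⟨x₂, hx₂, rfl⟩
  have hfg₁ : f (g (f x₁)) = f x₁ := Function.invFunOn_eq ⟨x₁, hx₁, rfl⟩
  have hfg₂ : f (g (f x₂)) = f x₂ := Function.invFunOn_eq ⟨x₂, hx₂, rfl⟩
  have hup := (hf _ hg₁ _ hg₂).2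
  have hlow := hf.dist_le (by linarith) hg₁ hg₂
  rw [hfg₁, hfg₂] at hup hlow
  constructor
  · rw [sub_le_iff_le_add, one_div, inv_mul_le_iff₀ (by linarith)]
    have : M ≤ K * (K * M) :=
      (le_mul_of_one_le_left hM hK).trans (le_mul_of_one_le_left (by positivity) hK)
    linarith
  · linarith

/-- Additive constants coming from the position of `S` are absorbed because `massMeas` only sees
large cubes; this is why `c` does not depend on `S`. -/
theorem exists_massMeas_le (hK : 0 < K) (hM : 0 ≤ M) (β : ℝ) :
    ∃ c : ℝ, ∀ (S : Set (EuclideanSpace ℝ ι)) (φ : EuclideanSpace ℝ ι → EuclideanSpace ℝ κ),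
      QIEOn K M S φ → massMeas β S ≤ ENNReal.ofReal c * massMeas β (φ '' S) := by
  obtain ⟨N, hN⟩ := exists_encard_floorSet_le (ι := ι) (K * (√(Fintype.card κ) + M))
  set C := K * √(Fintype.card ι) + 1
  have hC : 0 < C := by positivity
  refine ⟨N * C ^ β, fun S φ hφ => ?_⟩
  rcases S.eq_empty_or_nonempty with rfl | ⟨p, hp⟩
  · simp [massMeas_empty]
  refine massMeas_le_of_encard_le (L₀ := ‖φ p‖ + K * ‖p‖ + M + C) hC β fun ℓ hℓ => ?_
  have hsub : floorSet S ∩ centeredCube ℓ ⊆ ⋃ b ∈ floorSet (φ '' S) ∩ centeredCube (C * ℓ),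
      floorSet {y ∈ S | floorPt (φ y) = b} := by
    rintro _ ⟨⟨y, hy, rfl⟩, hyℓ⟩
    refine mem_biUnion ⟨⟨φ y, mem_image_of_mem φ hy, rfl⟩, floorPt_mem_centeredCube ?_⟩
      ⟨y, ⟨hy, rfl⟩, rfl⟩
    have hφy := hφ.norm_le hK.le hp hy
    have hy := norm_le_of_floorPt_mem_centeredCube (le_trans (by positivity) hℓ) hyℓ
    nlinarith
  calc (floorSet S ∩ centeredCube ℓ).encard ≤ _ := encard_mono hsub
    _ ≤ N * (floorSet (φ '' S) ∩ centeredCube (C * ℓ)).encard :=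
      encard_biUnion_le_mul fun b _ => hN _ fun x hx y hy =>
        hφ.dist_le_of_floorPt_eq hK hx.1 hy.1 (hx.2.trans hy.2.symm)

end QIEOn

section Comparable

variable {μ ν a : ℝ≥0∞}

lemma eq_zero_iff_of_le_mul_of_le_mul (h₁ : μ ≤ a * ν) (h₂ : ν ≤ a * μ) :
    μ = 0 ↔ ν = 0 :=
  ⟨fun h => le_zero_iff.1 (by simpa [h] using h₂), fun h => le_zero_iff.1 (by simpa [h] using h₁)⟩

lemma pos_and_lt_top_iff_of_le_mul_of_le_mul (ha : a ≠ ⊤) (h₁ : μ ≤ a * ν) (h₂ : ν ≤ a * μ) :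
    (0 < μ ∧ μ < ⊤) ↔ (0 < ν ∧ ν < ⊤) := by
  simp only [pos_iff_ne_zero, ne_eq, eq_zero_iff_of_le_mul_of_le_mul h₁ h₂]
  exact and_congr_right fun _ =>
    ⟨fun h => h₂.trans_lt (ENNReal.mul_lt_top ha.lt_top h),
      fun h => h₁.trans_lt (ENNReal.mul_lt_top ha.lt_top h)⟩

end Comparable

theorem QIEOn.exists_massMeas_image_comparable {κ : Type*} [Fintype κ] {K M : ℝ}
    {X : Set (EuclideanSpace ℝ ι)} {f : EuclideanSpace ℝ ι → EuclideanSpace ℝ κ}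
    (hf : QIEOn K M X f) (hK : 1 ≤ K) (hM : 0 ≤ M) (β : ℝ) :
    ∃ c : ℝ, 1 ≤ c ∧ ∀ A ⊆ X,
      massMeas β A ≤ ENNReal.ofReal c * massMeas β (f '' A) ∧
      massMeas β (f '' A) ≤ ENNReal.ofReal c * massMeas β A := by
  obtain ⟨c₁, hc₁⟩ := QIEOn.exists_massMeas_le (ι := ι) (κ := κ) (by linarith : 0 < K) hM β
  obtain ⟨c₂, hc₂⟩ := QIEOn.exists_massMeas_le (κ := ι) (ι := κ) (by linarith : 0 < K)
    (by positivity : 0 ≤ K * M) β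
  refine ⟨max 1 (max c₁ c₂), le_max_left _ _, fun A hA => ⟨?_, ?_⟩⟩
  · exact (hc₁ A f (hf.mono hA)).trans (by gcongr; simp)
  · have hg := (hf.mono hA).invFunOn hK hM
    have hgA : Function.invFunOn f A '' (f '' A) ⊆ A :=
      image_subset_iff.2 fun _ hy => Function.invFunOn_mem hy
    exact (hc₂ _ _ hg).trans (by gcongr <;> simp [massMeas_mono hgA])

theorem stmt_10_general (k d : ℕ) (K M : ℝ) (hK : 1 ≤ K) (hM : 0 ≤ M)
    (X : Set (EuclideanSpace ℝ (Fin k)))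
    (f : EuclideanSpace ℝ (Fin k) → EuclideanSpace ℝ (Fin d))
    (hf : QIEOn K M X f) (α : ℝ) :
    ∃ c : ℝ, 1 ≤ c ∧ ∀ A ⊆ X,
      massMeas α A ≤ ENNReal.ofReal c * massMeas α (f '' A) ∧
      massMeas α (f '' A) ≤ ENNReal.ofReal c * massMeas α A ∧
      ((0 < massMeas α A ∧ massMeas α A < ⊤) ↔
        (0 < massMeas α (f '' A) ∧ massMeas α (f '' A) < ⊤)) ∧
      mdim A = mdim (f '' A) := by
  obtain ⟨c, hc, hcA⟩ := hf.exists_massMeas_image_comparable hK hM α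
  refine ⟨c, hc, fun A hA => ?_⟩
  obtain ⟨h₁, h₂⟩ := hcA A hA
  have hzero (β : ℝ) : massMeas β A = 0 ↔ massMeas β (f '' A) = 0 := by
    obtain ⟨_, -, hc'A⟩ := hf.exists_massMeas_image_comparable hK hM β
    exact eq_zero_iff_of_le_mul_of_le_mul (hc'A A hA).1 (hc'A A hA).2
  exact ⟨h₁, h₂, pos_and_lt_top_iff_of_le_mul_of_le_mul ENNReal.ofReal_ne_top h₁ h₂,
    by simp only [mdim, hzero]⟩

/-- Invariance of the mass measures (up to a multiplicative constant depending only on `α`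
and `f`), of `α`-mass regularity, and of the mass dimension under a quasi-isometric
embedding `f : X → ℝ^d`, `X ⊆ ℝ^k`. -/
theorem stmt_10 (k d : ℕ) (K M : ℝ) (hK : 1 ≤ K) (hM : 0 ≤ M)
    (X : Set (EuclideanSpace ℝ (Fin k)))
    (f : EuclideanSpace ℝ (Fin k) → EuclideanSpace ℝ (Fin d))
    (hf : QIEOn K M X f) (α : ℝ) (hα : 0 ≤ α) :
    ∃ c : ℝ, 1 ≤ c ∧ ∀ A ⊆ X,
      massMeas α A ≤ ENNReal.ofReal c * massMeas α (f '' A) ∧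
      massMeas α (f '' A) ≤ ENNReal.ofReal c * massMeas α A ∧
      ((0 < massMeas α A ∧ massMeas α A < ⊤) ↔
        (0 < massMeas α (f '' A) ∧ massMeas α (f '' A) < ⊤)) ∧
      mdim A = mdim (f '' A) :=
  stmt_10_general k d K M hK hM X f hf α

end
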